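/- arXiv:2506.22522 — 2 statements merged into one kernel-verified Lean document; each statement's English description precedes it below -/
import Mathlib

section
/- Let 𝓕 = 𝓖 = ((e_m, e_m*))_{m≥1} be the canonical orthonormal basis of ℓ_2 with its coordinate functionals, and let u = e_1 ⊗ e_1 + e_2 ⊗ e_2 ∈ ℓ_2 ⊗ ℓ_2. Then α^Bess_{𝓕,𝓖}(u) = 1, while the projective tensor norm satisfies π(u) = 2. In particular α^Bess_{𝓕,𝓖} is not proportional to the projective norm on ℓ_2 ⊗ ℓ_2. -/
open Filter Finset TensorProduct
open scoped ENNReal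

variable {𝕂 : Type*} [RCLike 𝕂]

/-- `ℓ_2` over `𝕂`. -/
noncomputable abbrev ellTwo (𝕂 : Type*) [RCLike 𝕂] := lp (fun _ : ℕ => 𝕂) 2

/-- The canonical basis vector `e_n` of `ℓ_2`. -/
noncomputable def eTwo (𝕂 : Type*) [RCLike 𝕂] (n : ℕ) : ellTwo 𝕂 :=
  lp.single 2 n (1 : 𝕂)

/-- The Besselian crossnorm `α^Bess_{𝓕,𝓖}` on `ℓ_2 ⊗ ℓ_2`, where `𝓕 = 𝓖` is the
canonical orthonormal basis `((e_m, e_m*))` of `ℓ_2` (so `e_m*(x) = x_m`). -/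
noncomputable def alphaBessL2 (u : ellTwo 𝕂 ⊗[𝕂] ellTwo 𝕂) : ℝ :=
  sInf {t : ℝ | ∃ (R : ℕ) (x y : ℕ → ellTwo 𝕂),
    u = ∑ r ∈ Finset.range R, x r ⊗ₜ[𝕂] y r ∧
    t = ⨆ fg : {f : ellTwo 𝕂 →L[𝕂] 𝕂 // ‖f‖ ≤ 1} × {g : ellTwo 𝕂 →L[𝕂] 𝕂 // ‖g‖ ≤ 1},
      ∑ r ∈ Finset.range R, ∑' mn : ℕ × ℕ,
        ‖x r mn.1‖ * ‖y r mn.2‖ * ‖fg.1.1 (eTwo 𝕂 mn.1)‖ * ‖fg.2.1 (eTwo 𝕂 mn.2)‖}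

/-- The projective tensor norm `π` on `ℓ_2 ⊗ ℓ_2` (with respect to the `ℓ_2` norms). -/
noncomputable def projNormL2 (u : ellTwo 𝕂 ⊗[𝕂] ellTwo 𝕂) : ℝ :=
  sInf {t : ℝ | ∃ (R : ℕ) (x y : ℕ → ellTwo 𝕂),
    u = ∑ r ∈ Finset.range R, x r ⊗ₜ[𝕂] y r ∧
    t = ∑ r ∈ Finset.range R, ‖x r‖ * ‖y r‖}

/-! Write `u_N = ∑_{r<N} e_r ⊗ e_r`. The representation `u_N` itself has projective cost `N`
and Bess value `sup_{f,g} ∑_{r<N} |f e_r| |g e_r| ≤ ‖f‖ ‖g‖` (Cauchy–Schwarz after the Riesz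
representation `(ℓ_2)* ≅ ℓ_2`). Conversely, every representation `∑ x_r ⊗ y_r` of `u_N` gives the
same value to the bilinear forms `e_0* ⊗ e_0*` and `∑_{i<N} e_i* ⊗ e_i*`, namely `1` and `N`:
the first is one of the pairs in the supremum defining Bess, so `α^Bess(u_N) ≥ 1`, and the second
is bounded by `‖x‖ ‖y‖` on `x ⊗ y`, so `π(u_N) ≥ N`. Hence `α^Bess = 1` on `u_1` and `u_2`,
while `π(u_1) = 1` and `π(u_2) = 2`. -/

section TensorRepresentation

variable {R E F ι : Type*} [CommSemiring R] [AddCommMonoid E] [Module R E]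
  [AddCommMonoid F] [Module R F]

lemma sum_mul_eq_of_sum_tmul_eq (f : E →ₗ[R] R) (g : F →ₗ[R] R) {s t : Finset ι}
    {x x' : ι → E} {y y' : ι → F}
    (h : ∑ r ∈ s, x r ⊗ₜ[R] y r = ∑ r ∈ t, x' r ⊗ₜ[R] y' r) :
    ∑ r ∈ s, f (x r) * g (y r) = ∑ r ∈ t, f (x' r) * g (y' r) := by
  simpa using congrArg (TensorProduct.lift ((LinearMap.mul R R).compl₁₂ f g)) h

lemma csInf_representations_eq {u : E ⊗[R] F} {Φ : ℕ → (ℕ → E) → (ℕ → F) → ℝ} {c : ℝ}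
    (hmem : ∃ (N : ℕ) (x : ℕ → E) (y : ℕ → F),
      u = ∑ r ∈ range N, x r ⊗ₜ[R] y r ∧ Φ N x y = c)
    (hle : ∀ (N : ℕ) (x : ℕ → E) (y : ℕ → F), u = ∑ r ∈ range N, x r ⊗ₜ[R] y r → c ≤ Φ N x y) :
    sInf {t : ℝ | ∃ (N : ℕ) (x : ℕ → E) (y : ℕ → F),
      u = ∑ r ∈ range N, x r ⊗ₜ[R] y r ∧ t = Φ N x y} = c := by
  obtain ⟨N, x, y, hu, rfl⟩ := hmem
  refine IsLeast.csInf_eq ⟨⟨N, x, y, hu, rfl⟩, ?_⟩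
  rintro t ⟨M, x', y', hu', rfl⟩
  exact hle M x' y' hu'

end TensorRepresentation

namespace lp

variable {ι : Type*}

lemma tsum_norm_mul_norm_le {E : ι → Type*} [∀ i, NormedAddCommGroup (E i)]
    (x y : lp E 2) :
    (Summable fun i => ‖x i‖ * ‖y i‖) ∧ ∑' i, ‖x i‖ * ‖y i‖ ≤ ‖x‖ * ‖y‖ :=
  lp.tsum_mul_le_mul_norm (by simpa using Real.HolderConjugate.two_two) x y

lemma sum_norm_mul_norm_le {E : ι → Type*} [∀ i, NormedAddCommGroup (E i)]
    (x y : lp E 2) (s : Finset ι) : ∑ i ∈ s, ‖x i‖ * ‖y i‖ ≤ ‖x‖ * ‖y‖ :=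
  ((tsum_norm_mul_norm_le x y).1.sum_le_tsum s fun _ _ => by positivity).trans
    (tsum_norm_mul_norm_le x y).2

variable [DecidableEq ι]

lemma norm_apply_single_eq_norm_toDual_symm_apply (f : lp (fun _ : ι => 𝕂) 2 →L[𝕂] 𝕂) (i : ι) :
    ‖f (lp.single 2 i 1)‖ = ‖(InnerProductSpace.toDual 𝕂 _).symm f i‖ := by
  rw [← InnerProductSpace.toDual_symm_apply, lp.inner_single_right, RCLike.inner_apply]
  simp

lemma tsum_norm_mul_norm_apply_single_le (x : lp (fun _ : ι => 𝕂) 2)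
    (f : lp (fun _ : ι => 𝕂) 2 →L[𝕂] 𝕂) :
    (Summable fun i => ‖x i‖ * ‖f (lp.single 2 i 1)‖) ∧
      ∑' i, ‖x i‖ * ‖f (lp.single 2 i 1)‖ ≤ ‖x‖ * ‖f‖ := by
  simp_rw [norm_apply_single_eq_norm_toDual_symm_apply]
  simpa using tsum_norm_mul_norm_le x ((InnerProductSpace.toDual 𝕂 _).symm f)

lemma sum_norm_apply_single_mul_le (f g : lp (fun _ : ι => 𝕂) 2 →L[𝕂] 𝕂) (s : Finset ι) :
    ∑ i ∈ s, ‖f (lp.single 2 i 1)‖ * ‖g (lp.single 2 i 1)‖ ≤ ‖f‖ * ‖g‖ := by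
  simp_rw [norm_apply_single_eq_norm_toDual_symm_apply]
  simpa using sum_norm_mul_norm_le ((InnerProductSpace.toDual 𝕂 _).symm f)
    ((InnerProductSpace.toDual 𝕂 _).symm g) s

end lp

lemma eTwo_apply (n m : ℕ) : eTwo 𝕂 n m = if m = n then 1 else 0 := by
  simp [eTwo, Pi.single_apply]

lemma norm_eTwo_apply (n m : ℕ) : ‖eTwo 𝕂 n m‖ = if m = n then 1 else 0 := by
  simp [eTwo_apply, apply_ite norm]

lemma norm_eTwo (n : ℕ) : ‖eTwo 𝕂 n‖ = 1 := by
  simp [eTwo, lp.norm_single]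

lemma sum_range_eTwo_apply_mul_self (N i : ℕ) :
    ∑ r ∈ range N, eTwo 𝕂 r i * eTwo 𝕂 r i = if i < N then 1 else 0 := by
  simp [eTwo_apply]

abbrev DualUnitBall (𝕂 : Type*) [RCLike 𝕂] := {f : ellTwo 𝕂 →L[𝕂] 𝕂 // ‖f‖ ≤ 1}

instance : Nonempty (DualUnitBall 𝕂) := ⟨⟨0, by simp⟩⟩

noncomputable def bessTerm (x y : ellTwo 𝕂) (f g : ellTwo 𝕂 →L[𝕂] 𝕂) : ℝ :=
  ∑' mn : ℕ × ℕ, ‖x mn.1‖ * ‖y mn.2‖ * ‖f (eTwo 𝕂 mn.1)‖ * ‖g (eTwo 𝕂 mn.2)‖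

/-- `bess N x y` is the paper's `Bess(∑_{r<N} x r ⊗ y r)`. -/
noncomputable def bess (N : ℕ) (x y : ℕ → ellTwo 𝕂) : ℝ :=
  ⨆ fg : DualUnitBall 𝕂 × DualUnitBall 𝕂, ∑ r ∈ range N, bessTerm (x r) (y r) fg.1.1 fg.2.1

lemma alphaBessL2_eq (u : ellTwo 𝕂 ⊗[𝕂] ellTwo 𝕂) :
    alphaBessL2 u = sInf {t : ℝ | ∃ (N : ℕ) (x y : ℕ → ellTwo 𝕂),
      u = ∑ r ∈ range N, x r ⊗ₜ[𝕂] y r ∧ t = bess N x y} := rfl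

lemma bessTerm_eq_mul (x y : ellTwo 𝕂) (f g : ellTwo 𝕂 →L[𝕂] 𝕂) :
    bessTerm x y f g = (∑' m, ‖x m‖ * ‖f (eTwo 𝕂 m)‖) * ∑' n, ‖y n‖ * ‖g (eTwo 𝕂 n)‖ := by
  have hx : Summable fun m => ‖x m‖ * ‖f (eTwo 𝕂 m)‖ :=
    (lp.tsum_norm_mul_norm_apply_single_le x f).1
  have hy : Summable fun n => ‖y n‖ * ‖g (eTwo 𝕂 n)‖ :=
    (lp.tsum_norm_mul_norm_apply_single_le y g).1
  rw [hx.tsum_mul_tsum hy (hx.mul_of_nonneg hy (fun _ => by positivity) fun _ => by positivity)]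
  exact tsum_congr fun mn => by ring

lemma bessTerm_le (x y : ellTwo 𝕂) (f g : DualUnitBall 𝕂) :
    bessTerm x y f.1 g.1 ≤ ‖x‖ * ‖y‖ := by
  rw [bessTerm_eq_mul]
  calc _ ≤ (‖x‖ * ‖f.1‖) * (‖y‖ * ‖g.1‖) :=
        mul_le_mul (lp.tsum_norm_mul_norm_apply_single_le x f).2
          (lp.tsum_norm_mul_norm_apply_single_le y g).2 (tsum_nonneg fun _ => by positivity)
          (by positivity)
    _ ≤ (‖x‖ * 1) * (‖y‖ * 1) := by gcongr; exacts [f.2, g.2]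
    _ = ‖x‖ * ‖y‖ := by ring

lemma bessTerm_eTwo (r : ℕ) (f g : ellTwo 𝕂 →L[𝕂] 𝕂) :
    bessTerm (eTwo 𝕂 r) (eTwo 𝕂 r) f g = ‖f (eTwo 𝕂 r)‖ * ‖g (eTwo 𝕂 r)‖ := by
  simp [bessTerm_eq_mul, norm_eTwo_apply]

noncomputable def DualUnitBall.eval (𝕂 : Type*) [RCLike 𝕂] (i : ℕ) : DualUnitBall 𝕂 :=
  ⟨lp.evalCLM 𝕂 _ 2 i, LinearMap.mkContinuous_norm_le _ zero_le_one _⟩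

lemma bessTerm_dualUnitBall_eval (x y : ellTwo 𝕂) (i : ℕ) :
    bessTerm x y (DualUnitBall.eval 𝕂 i).1 (DualUnitBall.eval 𝕂 i).1 = ‖x i‖ * ‖y i‖ := by
  simp [bessTerm_eq_mul, DualUnitBall.eval, lp.evalCLM, norm_eTwo_apply]

lemma bddAbove_bess (N : ℕ) (x y : ℕ → ellTwo 𝕂) :
    BddAbove (Set.range fun fg : DualUnitBall 𝕂 × DualUnitBall 𝕂 =>
      ∑ r ∈ range N, bessTerm (x r) (y r) fg.1.1 fg.2.1) :=
  ⟨∑ r ∈ range N, ‖x r‖ * ‖y r‖, Set.forall_mem_range.2 fun fg =>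
    sum_le_sum fun r _ => bessTerm_le (x r) (y r) fg.1 fg.2⟩

lemma norm_sum_apply_mul_apply_le_bess (N : ℕ) (x y : ℕ → ellTwo 𝕂) (i : ℕ) :
    ‖∑ r ∈ range N, x r i * y r i‖ ≤ bess N x y :=
  calc _ ≤ ∑ r ∈ range N, ‖x r i‖ * ‖y r i‖ := norm_sum_le_of_le _ fun r _ => norm_mul_le _ _
    _ = ∑ r ∈ range N, bessTerm (x r) (y r) (DualUnitBall.eval 𝕂 i).1 (DualUnitBall.eval 𝕂 i).1 := by
        simp only [bessTerm_dualUnitBall_eval]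
    _ ≤ bess N x y := le_ciSup (bddAbove_bess N x y) (DualUnitBall.eval 𝕂 i, DualUnitBall.eval 𝕂 i)

lemma bess_eTwo (N : ℕ) (hN : 0 < N) : bess N (eTwo 𝕂) (eTwo 𝕂) = 1 := by
  refine le_antisymm (ciSup_le fun fg => ?_) ?_
  · simp only [bessTerm_eTwo]
    calc _ ≤ ‖fg.1.1‖ * ‖fg.2.1‖ := lp.sum_norm_apply_single_mul_le fg.1.1 fg.2.1 (range N)
      _ ≤ 1 * 1 := by gcongr; exacts [fg.1.2, fg.2.2]
      _ = 1 := one_mul 1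
  · simpa [sum_range_eTwo_apply_mul_self, hN] using
      norm_sum_apply_mul_apply_le_bess N (eTwo 𝕂) (eTwo 𝕂) 0

lemma alphaBessL2_sum_eTwo_tmul_eTwo (N : ℕ) (hN : 0 < N) :
    alphaBessL2 (∑ r ∈ range N, eTwo 𝕂 r ⊗ₜ[𝕂] eTwo 𝕂 r) = 1 := by
  rw [alphaBessL2_eq]
  refine csInf_representations_eq ⟨N, eTwo 𝕂, eTwo 𝕂, rfl, bess_eTwo N hN⟩ fun M x y hu => ?_
  have hpair : ∑ r ∈ range N, eTwo 𝕂 r 0 * eTwo 𝕂 r 0 = ∑ r ∈ range M, x r 0 * y r 0 :=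
    sum_mul_eq_of_sum_tmul_eq (lp.evalₗ (fun _ => 𝕂) 2 0) (lp.evalₗ (fun _ => 𝕂) 2 0) hu
  rw [sum_range_eTwo_apply_mul_self, if_pos hN] at hpair
  simpa [← hpair] using norm_sum_apply_mul_apply_le_bess M x y 0

lemma projNormL2_sum_eTwo_tmul_eTwo (N : ℕ) :
    projNormL2 (∑ r ∈ range N, eTwo 𝕂 r ⊗ₜ[𝕂] eTwo 𝕂 r) = N := by
  refine csInf_representations_eq (Φ := fun M x y => ∑ r ∈ range M, ‖x r‖ * ‖y r‖)
    ⟨N, eTwo 𝕂, eTwo 𝕂, rfl, by simp [norm_eTwo]⟩ fun M x y hu => ?_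
  have hpair (i : ℕ) : ∑ r ∈ range N, eTwo 𝕂 r i * eTwo 𝕂 r i = ∑ r ∈ range M, x r i * y r i :=
    sum_mul_eq_of_sum_tmul_eq (lp.evalₗ (fun _ => 𝕂) 2 i) (lp.evalₗ (fun _ => 𝕂) 2 i) hu
  have hN : (N : 𝕂) = ∑ r ∈ range M, ∑ i ∈ range N, x r i * y r i := by
    rw [Finset.sum_comm, ← sum_congr rfl fun i _ => hpair i,
      sum_congr rfl fun i hi => by rw [sum_range_eTwo_apply_mul_self, if_pos (mem_range.1 hi)]]
    simp
  calc (N : ℝ) = ‖(N : 𝕂)‖ := by simp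
    _ ≤ ∑ r ∈ range M, ∑ i ∈ range N, ‖x r i‖ * ‖y r i‖ := by
        rw [hN]
        exact norm_sum_le_of_le _ fun r _ => norm_sum_le_of_le _ fun i _ => norm_mul_le _ _
    _ ≤ ∑ r ∈ range M, ‖x r‖ * ‖y r‖ :=
        sum_le_sum fun r _ => lp.sum_norm_mul_norm_le (x r) (y r) (range N)

/-- For the canonical orthonormal basis `𝓕 = 𝓖 = ((e_m, e_m*))` of `ℓ_2`
and `u = e_1 ⊗ e_1 + e_2 ⊗ e_2`, one has `α^Bess_{𝓕,𝓖}(u) = 1` while `π(u) = 2`; in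
particular `α^Bess_{𝓕,𝓖}` is not proportional to the projective norm on `ℓ_2 ⊗ ℓ_2`. -/
theorem alphaBess_ellTwo_ne_proj :
    alphaBessL2 (eTwo 𝕂 0 ⊗ₜ[𝕂] eTwo 𝕂 0 + eTwo 𝕂 1 ⊗ₜ[𝕂] eTwo 𝕂 1) = 1 ∧
    projNormL2 (eTwo 𝕂 0 ⊗ₜ[𝕂] eTwo 𝕂 0 + eTwo 𝕂 1 ⊗ₜ[𝕂] eTwo 𝕂 1) = 2 ∧
    ¬ ∃ cst : ℝ, ∀ v : ellTwo 𝕂 ⊗[𝕂] ellTwo 𝕂,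
        alphaBessL2 v = cst * projNormL2 v := by
  have hu : eTwo 𝕂 0 ⊗ₜ[𝕂] eTwo 𝕂 0 + eTwo 𝕂 1 ⊗ₜ[𝕂] eTwo 𝕂 1 =
      ∑ r ∈ range 2, eTwo 𝕂 r ⊗ₜ[𝕂] eTwo 𝕂 r := by
    simp [sum_range_succ]
  have hα (N : ℕ) (hN : 0 < N) := alphaBessL2_sum_eTwo_tmul_eTwo (𝕂 := 𝕂) N hN
  have hπ (N : ℕ) := projNormL2_sum_eTwo_tmul_eTwo (𝕂 := 𝕂) N
  refine ⟨hu ▸ hα 2 two_pos, hu ▸ by exact_mod_cast hπ 2, ?_⟩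
  rintro ⟨c, hc⟩
  have h₁ := hc (∑ r ∈ range 1, eTwo 𝕂 r ⊗ₜ[𝕂] eTwo 𝕂 r)
  have h₂ := hc (∑ r ∈ range 2, eTwo 𝕂 r ⊗ₜ[𝕂] eTwo 𝕂 r)
  rw [hα 1 one_pos, hπ 1] at h₁
  rw [hα 2 two_pos, hπ 2] at h₂
  norm_num at h₁ h₂
  linarith
end

section
/- Let E, F be Banach spaces with unconditional Schauder bases 𝓕 = ((a_m, b_m*)) and 𝓖 = ((x_n, y_n*)). Then for every linear functional A* on the algebraic tensor product E ⊗ F that is bounded with respect to α^Bess_{𝓕,𝓖} (with operator norm ‖A*‖ taken with respect to α^Bess_{𝓕,𝓖}), and every u ∈ E ⊗ F, ∑_{m,n=1}^∞ |(b_m* ⊗ y_n*)(u)| |A*(a_m ⊗ x_n)| ≤ ‖A*‖ · α^Bess_{𝓕,𝓖}(u). (This is the Besselian inequality showing that the tensor product sequence ((a_m ⊗ x_n, b_m* ⊗ y_n*)), ordered in the square ordering, is a Besselian — hence unconditional — Schauder basis of E ⊗_{α^Bess_{𝓕,𝓖}} F.) -/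
open Filter Finset TensorProduct

variable {𝕂 : Type*} [RCLike 𝕂]
variable {E : Type*} [NormedAddCommGroup E] [NormedSpace 𝕂 E]
variable {F : Type*} [NormedAddCommGroup F] [NormedSpace 𝕂 F]

/-- `((a_m, b_m*))` is a Schauder frame for `E`: `x = ∑ b_m*(x) a_m` for all `x`. -/
def IsSchauderFrame (a : ℕ → E) (b : ℕ → E →L[𝕂] 𝕂) : Prop :=
  ∀ x : E, Tendsto (fun M : ℕ => ∑ m ∈ Finset.range M, b m x • a m) atTop (nhds x)

/-- `((a_m, b_m*))` is a Besselian Schauder frame for `E`. -/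
def IsBesselianSchauderFrame (a : ℕ → E) (b : ℕ → E →L[𝕂] 𝕂) : Prop :=
  IsSchauderFrame a b ∧
    ∃ B : ℝ, 0 < B ∧ ∀ (x : E) (f : E →L[𝕂] 𝕂),
      Summable (fun m : ℕ => ‖b m x‖ * ‖f (a m)‖) ∧
      ∑' m : ℕ, ‖b m x‖ * ‖f (a m)‖ ≤ B * ‖x‖ * ‖f‖

/-- `((a_m, b_m*))` is an unconditional Schauder basis of `E` (together with its
biorthogonal coefficient functionals): `b_i*(a_j) = δ_{i,j}` and every `x` is the
unconditional sum `∑ b_m*(x) a_m`. -/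
def IsUnconditionalSchauderBasis (a : ℕ → E) (b : ℕ → E →L[𝕂] 𝕂) : Prop :=
  (∀ i j : ℕ, b i (a j) = if i = j then 1 else 0) ∧
    ∀ x : E, ∀ σ : Equiv.Perm ℕ,
      Tendsto (fun M : ℕ => ∑ m ∈ Finset.range M, b (σ m) x • a (σ m)) atTop (nhds x)

/-- The Besselian constant `L_𝓕` of the frame `𝓕 = ((a_m, b_m*))`. -/
noncomputable def besselianConst (a : ℕ → E) (b : ℕ → E →L[𝕂] 𝕂) : ℝ :=
  ⨆ p : {x : E // ‖x‖ ≤ 1} × {f : E →L[𝕂] 𝕂 // ‖f‖ ≤ 1},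
    ∑' m : ℕ, ‖b m p.1.1‖ * ‖p.2.1 (a m)‖

/-- The Besselian norm `‖x‖^Bess_{E,𝓕} = sup_{‖f*‖ ≤ 1} ∑_m |b_m*(x) f*(a_m)|`. -/
noncomputable def bessNorm (a : ℕ → E) (b : ℕ → E →L[𝕂] 𝕂) (x : E) : ℝ :=
  ⨆ f : {f : E →L[𝕂] 𝕂 // ‖f‖ ≤ 1}, ∑' m : ℕ, ‖b m x‖ * ‖f.1 (a m)‖

/-- The dual norm on `E*` induced by the Besselian norm. -/
noncomputable def bessDualNorm (a : ℕ → E) (b : ℕ → E →L[𝕂] 𝕂) (f : E →L[𝕂] 𝕂) : ℝ :=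
  ⨆ x : {x : E // bessNorm a b x ≤ 1}, ‖f x.1‖

/-- The functional `f* ⊗ g*` on the algebraic tensor product:
`(f* ⊗ g*)(∑ x^r ⊗ y^r) = ∑ f*(x^r) g*(y^r)`. -/
noncomputable def dualPair (f : E →L[𝕂] 𝕂) (g : F →L[𝕂] 𝕂) : E ⊗[𝕂] F →ₗ[𝕂] 𝕂 :=
  TensorProduct.lift (((LinearMap.mul 𝕂 𝕂).compl₂ g.toLinearMap).comp f.toLinearMap)

/-- The quantity `Bess(∑_{r<R} x^r ⊗ y^r)` attached to a finite representation. -/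
noncomputable def bessRep (a : ℕ → E) (b : ℕ → E →L[𝕂] 𝕂)
    (c : ℕ → F) (d : ℕ → F →L[𝕂] 𝕂) (R : ℕ) (x : ℕ → E) (y : ℕ → F) : ℝ :=
  ⨆ fg : {f : E →L[𝕂] 𝕂 // ‖f‖ ≤ 1} × {g : F →L[𝕂] 𝕂 // ‖g‖ ≤ 1},
    ∑ r ∈ Finset.range R, ∑' mn : ℕ × ℕ,
      ‖b mn.1 (x r)‖ * ‖d mn.2 (y r)‖ * ‖fg.1.1 (a mn.1)‖ * ‖fg.2.1 (c mn.2)‖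

/-- The Besselian crossnorm `α^Bess_{𝓕,𝓖}` on `E ⊗ F`. -/
noncomputable def alphaBess (a : ℕ → E) (b : ℕ → E →L[𝕂] 𝕂)
    (c : ℕ → F) (d : ℕ → F →L[𝕂] 𝕂) (u : E ⊗[𝕂] F) : ℝ :=
  sInf {t : ℝ | ∃ (R : ℕ) (x : ℕ → E) (y : ℕ → F),
    u = ∑ r ∈ Finset.range R, x r ⊗ₜ[𝕂] y r ∧ t = bessRep a b c d R x y}

/-- The injective tensor norm on `E ⊗ F` formed with respect to the Besselian norms. -/
noncomputable def injNormBess (a : ℕ → E) (b : ℕ → E →L[𝕂] 𝕂)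
    (c : ℕ → F) (d : ℕ → F →L[𝕂] 𝕂) (u : E ⊗[𝕂] F) : ℝ :=
  ⨆ fg : {f : E →L[𝕂] 𝕂 // bessDualNorm a b f ≤ 1} ×
      {g : F →L[𝕂] 𝕂 // bessDualNorm c d g ≤ 1},
    ‖dualPair fg.1.1 fg.2.1 u‖

/-- The projective tensor norm on `E ⊗ F` formed with respect to the Besselian norms. -/
noncomputable def projNormBess (a : ℕ → E) (b : ℕ → E →L[𝕂] 𝕂)
    (c : ℕ → F) (d : ℕ → F →L[𝕂] 𝕂) (u : E ⊗[𝕂] F) : ℝ :=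
  sInf {t : ℝ | ∃ (R : ℕ) (x : ℕ → E) (y : ℕ → F),
    u = ∑ r ∈ Finset.range R, x r ⊗ₜ[𝕂] y r ∧
    t = ∑ r ∈ Finset.range R, bessNorm a b (x r) * bessNorm c d (y r)}

section AuxiliaryLemmas

open Topology

/-- If the positive part of `g` is not summable, we can enlarge any finite set to make the
sum of `g` over it at least `M`. -/
lemma exists_big_block {g : ℕ → ℝ} (h : ¬ Summable (fun m => max (g m) 0))
    (s : Finset ℕ) (M : ℝ) : ∃ T : Finset ℕ, M ≤ ∑ p ∈ s ∪ T, g p := by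
  have hpos : ∀ m, 0 ≤ max (g m) 0 := fun m => le_max_right _ _
  have htop : Tendsto (fun N => ∑ m ∈ range N, max (g m) 0) atTop atTop := by
    by_contra hc
    exact h ((summable_iff_not_tendsto_nat_atTop_of_nonneg hpos).2 hc)
  obtain ⟨N, hN⟩ := (htop.eventually_ge_atTop (M + ∑ p ∈ s, |g p|)).exists
  set T : Finset ℕ := (range N).filter (fun m => 0 < g m) with hT
  have h1 : ∑ m ∈ range N, max (g m) 0 = ∑ m ∈ T, g m := by
    rw [hT, Finset.sum_filter]
    refine Finset.sum_congr rfl fun m _ => ?_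
    rcases lt_or_ge 0 (g m) with h' | h'
    · simp [h', max_eq_left h'.le]
    · simp [not_lt.2 h', max_eq_right h']
  refine ⟨T, ?_⟩
  have hunion : s ∪ T = T ∪ (s \ T) := by
    rw [Finset.union_comm T, Finset.sdiff_union_self_eq_union, Finset.union_comm]
  rw [hunion, Finset.sum_union (Finset.sdiff_disjoint.symm)]
  have h2 : -∑ p ∈ s, |g p| ≤ ∑ p ∈ s \ T, g p := by
    calc -∑ p ∈ s, |g p| ≤ -∑ p ∈ s \ T, |g p| := by
          apply neg_le_neg
          exact Finset.sum_le_sum_of_subset_of_nonneg (Finset.sdiff_subset)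
            (fun _ _ _ => abs_nonneg _)
      _ = ∑ p ∈ s \ T, -|g p| := by rw [Finset.sum_neg_distrib]
      _ ≤ ∑ p ∈ s \ T, g p := Finset.sum_le_sum fun p _ => neg_abs_le _
  have := add_le_add (h1 ▸ hN) h2
  linarith

/-- Core of Riemann's rearrangement argument: if the positive part of `g` is not summable
then some rearrangement of `g` has unbounded partial sums. -/
lemma exists_perm_not_tendsto {g : ℕ → ℝ} (h : ¬ Summable (fun m => max (g m) 0)) (L : ℝ) :
    ∃ σ : Equiv.Perm ℕ, ¬ Tendsto (fun M : ℕ => ∑ m ∈ range M, g (σ m)) atTop (𝓝 L) := by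
  classical
  choose T hT using exists_big_block h
  -- nested exhausting finsets
  let s : ℕ → Finset ℕ := fun k => Nat.rec ∅ (fun k sk => (sk ∪ {k}) ∪ T (sk ∪ {k}) k) k
  have hs_succ : ∀ k, s (k + 1) = (s k ∪ {k}) ∪ T (s k ∪ {k}) k := fun k => rfl
  have hs_zero : s 0 = ∅ := rfl
  have hsub : ∀ k, s k ⊆ s (k + 1) := fun k => by
    rw [hs_succ]; exact (Finset.subset_union_left).trans Finset.subset_union_left
  have hmono : Monotone s := monotone_nat_of_le_succ hsub
  have hmem : ∀ k, k ∈ s (k + 1) := fun k => by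
    rw [hs_succ]
    exact Finset.mem_union_left _ (Finset.mem_union_right _ (Finset.mem_singleton_self k))
  have hbig : ∀ k : ℕ, (k : ℝ) ≤ ∑ p ∈ s (k + 1), g p := fun k => by
    rw [hs_succ]; exact hT (s k ∪ {k}) k
  have hrange : ∀ k, range k ⊆ s k := fun k => by
    intro n hn
    rw [Finset.mem_range] at hn
    exact hmono (Nat.succ_le_of_lt hn) (hmem n)
  -- cardinalities
  set c : ℕ → ℕ := fun k => (s k).card with hc
  have hcmono : Monotone c := fun i j hij => Finset.card_le_card (hmono hij)
  have hcge : ∀ k, k ≤ c k := fun k => by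
    simpa using Finset.card_le_card (hrange k)
  have hex : ∀ m, ∃ k, m < c (k + 1) :=
    fun m => ⟨m, lt_of_lt_of_le (Nat.lt_succ_self m) (hcge (m + 1))⟩
  -- blocks
  set t : ℕ → Finset ℕ := fun k => s (k + 1) \ s k with ht
  have hcard_t : ∀ k, (t k).card = c (k + 1) - c k := fun k => Finset.card_sdiff_of_subset (hsub k)
  have ht_mem : ∀ k n, n ∈ t k ↔ n ∈ s (k + 1) ∧ n ∉ s k := fun k n => Finset.mem_sdiff
  set LL : ℕ → List ℕ := fun k => (t k).sort (· ≤ ·) with hLL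
  have hlen : ∀ k, (LL k).length = c (k + 1) - c k := fun k => by
    rw [hLL]; simp [Finset.length_sort, hcard_t k]
  -- index of block
  set K : ℕ → ℕ := fun m => Nat.find (hex m) with hK
  have hK1 : ∀ m, m < c (K m + 1) := fun m => Nat.find_spec (hex m)
  have hK2 : ∀ m, c (K m) ≤ m := fun m => by
    rcases Nat.eq_zero_or_pos (K m) with h0 | h0
    · rw [h0]; simp [hc, hs_zero]
    · obtain ⟨j, hj⟩ : ∃ j, K m = j + 1 := ⟨K m - 1, by omega⟩
      have hmin : ¬ m < c (j + 1) := Nat.find_min (hex m) (show j < K m by omega)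
      rw [hj]; omega
  have hlt : ∀ m, m - c (K m) < (LL (K m)).length := fun m => by
    rw [hlen]
    have := hK1 m; have := hK2 m; omega
  -- the enumeration
  set f : ℕ → ℕ := fun m => (LL (K m)).getD (m - c (K m)) 0 with hf
  have hfget : ∀ m, f m = (LL (K m))[m - c (K m)]'(hlt m) := fun m =>
    List.getD_eq_getElem _ _ (hlt m)
  have hf_mem : ∀ m, f m ∈ t (K m) := fun m => by
    have h1 : f m ∈ LL (K m) := hfget m ▸ List.getElem_mem _
    exact (Finset.mem_sort _).1 h1
  have hdisj : ∀ {j k : ℕ}, j < k → Disjoint (t j) (t k) := by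
    intro j k hjk
    have h1 : t j ⊆ s k := (Finset.sdiff_subset).trans (hmono hjk)
    exact Finset.disjoint_left.2 fun n hn hn' => ((ht_mem k n).1 hn').2 (h1 hn)
  have hinj : Function.Injective f := by
    intro m1 m2 heq
    rcases lt_trichotomy (K m1) (K m2) with hk | hk | hk
    · exfalso
      have h1 := hf_mem m1
      rw [heq] at h1
      exact Finset.disjoint_left.1 (hdisj hk) h1 (hf_mem m2)
    · have heq' := heq
      simp only [hf, hk] at heq'
      have hlt1 : m1 - c (K m2) < (LL (K m2)).length := by rw [← hk]; exact hlt m1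
      have hlt2 : m2 - c (K m2) < (LL (K m2)).length := hlt m2
      rw [List.getD_eq_getElem _ _ hlt1, List.getD_eq_getElem _ _ hlt2] at heq'
      have hnd : (LL (K m2)).Nodup := Finset.sort_nodup _ _
      have hij : m1 - c (K m2) = m2 - c (K m2) := (hnd.getElem_inj_iff).1 heq'
      have h1 := hK2 m1; have h2 := hK2 m2
      rw [hk] at h1
      omega
    · exfalso
      have h2 := hf_mem m2
      rw [← heq] at h2
      exact Finset.disjoint_left.1 (hdisj hk) h2 (hf_mem m1)
  -- surjectivity
  have hexn : ∀ n : ℕ, ∃ k, n ∈ s (k + 1) := fun n => ⟨n, hmem n⟩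
  have hsurj_aux : ∀ n, ∃ m, f m = n ∧ ∀ k, n ∈ s k → m < c k := by
    intro n
    set k0 := Nat.find (hexn n) with hk0
    have hn1 : n ∈ s (k0 + 1) := Nat.find_spec (hexn n)
    have hn0 : n ∉ s k0 := by
      rcases Nat.eq_zero_or_pos k0 with h0 | h0
      · rw [h0, hs_zero]; exact Finset.notMem_empty n
      · obtain ⟨j, hj⟩ : ∃ j, k0 = j + 1 := ⟨k0 - 1, by omega⟩
        rw [hj]; exact Nat.find_min (hexn n) (by omega)
    have hnt : n ∈ t k0 := (ht_mem k0 n).2 ⟨hn1, hn0⟩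
    have hnl : n ∈ LL k0 := by rw [hLL]; exact (Finset.mem_sort _).2 hnt
    obtain ⟨i, hilen, hi⟩ := List.getElem_of_mem hnl
    have hib : i < c (k0 + 1) - c k0 := by rw [← hlen]; exact hilen
    set m := c k0 + i with hm
    have hmlt : m < c (k0 + 1) := by
      have := hcmono (Nat.le_succ k0); omega
    have hmK : K m = k0 := by
      rw [hK]
      apply (Nat.find_eq_iff (hex m)).2
      refine ⟨hmlt, fun j hj => ?_⟩
      have : c (j + 1) ≤ c k0 := hcmono hj
      omega
    have hidx : m - c k0 = i := by omega
    refine ⟨m, ?_, ?_⟩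
    · simp only [hf, hmK, hidx]
      rw [List.getD_eq_getElem _ _ (hidx ▸ hilen)]
      exact hi
    · intro k hnk
      have hk0k : k0 < k := by
        by_contra hle
        push_neg at hle
        exact hn0 (hmono hle hnk)
      have h1 : c (k0 + 1) ≤ c k := hcmono hk0k
      omega
  have hsurj : Function.Surjective f := fun n => by
    obtain ⟨m, hm, -⟩ := hsurj_aux n; exact ⟨m, hm⟩
  set σ : Equiv.Perm ℕ := Equiv.ofBijective f ⟨hinj, hsurj⟩ with hσ
  have hσf : ∀ m, σ m = f m := fun m => rfl
  -- checkpoint sums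
  have hsum_chk : ∀ k, ∑ m ∈ range (c k), g (f m) = ∑ p ∈ s k, g p := by
    intro k
    apply Finset.sum_bij (fun m _ => f m)
    · intro m hm
      rw [Finset.mem_range] at hm
      have hKm : K m < k := by
        by_contra hle
        push_neg at hle
        have := hcmono hle
        have := hK2 m
        omega
      exact hmono (Nat.succ_le_of_lt hKm) ((Finset.sdiff_subset) (hf_mem m))
    · intro m1 _ m2 _ h; exact hinj h
    · intro n hn
      obtain ⟨m, hm, hlt'⟩ := hsurj_aux n
      exact ⟨m, Finset.mem_range.2 (hlt' k hn), hm⟩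
    · intro m _; rfl
  refine ⟨σ, fun hten => ?_⟩
  have hcof : Tendsto (fun k : ℕ => c (k + 1)) atTop atTop :=
    tendsto_atTop_mono (fun k => (Nat.le_succ k).trans (hcge (k + 1))) tendsto_id
  have hcomp : Tendsto (fun k : ℕ => ∑ m ∈ range (c (k + 1)), g (σ m)) atTop (𝓝 L) :=
    hten.comp hcof
  have hge : ∀ k : ℕ, (k : ℝ) ≤ ∑ m ∈ range (c (k + 1)), g (σ m) := by
    intro k
    have he : ∑ m ∈ range (c (k + 1)), g (σ m) = ∑ p ∈ s (k + 1), g p := by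
      simpa only [hσf] using hsum_chk (k + 1)
    rw [he]; exact hbig k
  have htop : Tendsto (fun k : ℕ => ∑ m ∈ range (c (k + 1)), g (σ m)) atTop atTop :=
    tendsto_atTop_mono hge tendsto_natCast_atTop_atTop
  exact not_tendsto_atTop_of_tendsto_nhds hcomp htop

/-- A real series converging under every permutation is absolutely summable. -/
lemma summable_abs_of_perm {g : ℕ → ℝ} {L : ℝ}
    (hg : ∀ σ : Equiv.Perm ℕ, Tendsto (fun M : ℕ => ∑ m ∈ range M, g (σ m)) atTop (𝓝 L)) :
    Summable fun m => |g m| := by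
  have h1 : Summable fun m => max (g m) 0 := by
    by_contra hc
    obtain ⟨σ, hσ⟩ := exists_perm_not_tendsto hc L
    exact hσ (hg σ)
  have h2 : Summable fun m => max (-g m) 0 := by
    by_contra hc
    obtain ⟨σ, hσ⟩ := exists_perm_not_tendsto hc (-L)
    refine hσ ?_
    have := (hg σ).neg
    simpa [Finset.sum_neg_distrib] using this
  have := h1.add h2
  refine this.congr fun m => ?_
  exact max_zero_add_max_neg_zero_eq_abs_self (g m)

/-- A scalar series converging under every permutation is absolutely summable. -/
lemma summable_norm_of_perm {g : ℕ → 𝕂} {L : 𝕂}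
    (hg : ∀ σ : Equiv.Perm ℕ, Tendsto (fun M : ℕ => ∑ m ∈ range M, g (σ m)) atTop (𝓝 L)) :
    Summable fun m => ‖g m‖ := by
  have hre : Summable fun m => |RCLike.re (g m)| := by
    apply summable_abs_of_perm (L := RCLike.re L)
    intro σ
    have := (RCLike.continuous_re.tendsto L).comp (hg σ)
    simpa [Function.comp_def, map_sum] using this
  have him : Summable fun m => |RCLike.im (g m)| := by
    apply summable_abs_of_perm (L := RCLike.im L)
    intro σ
    have := (RCLike.continuous_im.tendsto L).comp (hg σ)
    simpa [Function.comp_def, map_sum] using this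
  refine (hre.add him).of_nonneg_of_le (fun m => norm_nonneg _) fun m => ?_
  calc ‖g m‖ = ‖(RCLike.re (g m) : 𝕂) + (RCLike.im (g m) : 𝕂) * RCLike.I‖ := by
        rw [RCLike.re_add_im]
    _ ≤ ‖(RCLike.re (g m) : 𝕂)‖ + ‖(RCLike.im (g m) : 𝕂) * RCLike.I‖ := norm_add_le _ _
    _ ≤ |RCLike.re (g m)| + |RCLike.im (g m)| := by
        rw [norm_mul, RCLike.norm_ofReal, RCLike.norm_ofReal]
        have : ‖(RCLike.I : 𝕂)‖ ≤ 1 := by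
          rcases (RCLike.I_eq_zero_or_im_I_eq_one (K := 𝕂)) with h | h
          · simp [h]
          · rw [RCLike.norm_I_of_ne_zero]
            · intro h0; rw [h0] at h; simp at h
        nlinarith [abs_nonneg (RCLike.im (g m)), mul_le_of_le_one_right (abs_nonneg (RCLike.im (g m))) this]

/-- For an unconditional Schauder basis, coefficient series against any functional are
absolutely summable. -/
lemma usb_summable {a : ℕ → E} {b : ℕ → E →L[𝕂] 𝕂}
    (hF : IsUnconditionalSchauderBasis a b) (x : E) (f : E →L[𝕂] 𝕂) :
    Summable fun m => ‖b m x‖ * ‖f (a m)‖ := by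
  have hs : Summable fun m => ‖b m x * f (a m)‖ := by
    apply summable_norm_of_perm (L := f x)
    intro σ
    have := (f.continuous.tendsto x).comp (hF.2 x σ)
    simpa [Function.comp_def, map_sum, smul_eq_mul, mul_comm] using this
  exact hs.congr fun m => by rw [norm_mul]

/-- a unimodular factor turning a scalar into its norm -/
noncomputable def phase (z : 𝕂) : 𝕂 := if z = 0 then 1 else (‖z‖ : 𝕂) / z

lemma phase_norm_le (z : 𝕂) : ‖phase z‖ ≤ 1 := by
  unfold phase
  split_ifs with h
  · simp
  · rw [norm_div, RCLike.norm_ofReal, abs_norm]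
    rw [div_self (norm_ne_zero_iff.2 h)]

lemma phase_mul (z : 𝕂) : phase z * z = (‖z‖ : 𝕂) := by
  unfold phase
  split_ifs with h
  · simp [h]
  · rw [div_mul_cancel₀ _ h]

/-- Uniform Besselian bound for an unconditional Schauder basis, via Banach–Steinhaus. -/
lemma usb_bound {a : ℕ → E} {b : ℕ → E →L[𝕂] 𝕂}
    (hF : IsUnconditionalSchauderBasis a b) (x : E) :
    ∃ K : ℝ, 0 ≤ K ∧ ∀ f : E →L[𝕂] 𝕂, ‖f‖ ≤ 1 → ∑' m, ‖b m x‖ * ‖f (a m)‖ ≤ K := by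
  classical
  set φ : Finset ℕ × (ℕ → {z : 𝕂 // ‖z‖ ≤ 1}) → (E →L[𝕂] 𝕂) →L[𝕂] 𝕂 :=
    fun Tε => ∑ m ∈ Tε.1, ((Tε.2 m : 𝕂) * b m x) • ContinuousLinearMap.apply 𝕂 𝕂 (a m) with hφ
  have hpt : ∀ f : E →L[𝕂] 𝕂, ∃ Cf, ∀ i, ‖φ i f‖ ≤ Cf := by
    intro f
    refine ⟨∑' m, ‖b m x‖ * ‖f (a m)‖, fun ⟨Tf, ε⟩ => ?_⟩
    rw [hφ]
    simp only [ContinuousLinearMap.sum_apply, ContinuousLinearMap.smul_apply,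
      ContinuousLinearMap.apply_apply]
    calc ‖∑ m ∈ Tf, ((ε m : 𝕂) * b m x) • f (a m)‖ ≤
        ∑ m ∈ Tf, ‖((ε m : 𝕂) * b m x) • f (a m)‖ := norm_sum_le _ _
      _ ≤ ∑ m ∈ Tf, ‖b m x‖ * ‖f (a m)‖ := by
          apply Finset.sum_le_sum
          intro m _
          rw [smul_eq_mul, norm_mul, norm_mul]
          have h1 : ‖(ε m : 𝕂)‖ ≤ 1 := (ε m).2
          nlinarith [norm_nonneg (b m x), norm_nonneg (f (a m)), norm_nonneg (ε m : 𝕂),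
            mul_nonneg (norm_nonneg (b m x)) (norm_nonneg (f (a m)))]
      _ ≤ ∑' m, ‖b m x‖ * ‖f (a m)‖ := by
          apply Summable.sum_le_tsum _ (fun m _ => mul_nonneg (norm_nonneg _) (norm_nonneg _))
          exact usb_summable hF x f
  obtain ⟨K, hK⟩ := banach_steinhaus hpt
  refine ⟨max K 0, le_max_right _ _, fun f hf => ?_⟩
  apply Summable.tsum_le_of_sum_le (usb_summable hF x f)
  intro Tf
  set ε : ℕ → {z : 𝕂 // ‖z‖ ≤ 1} := fun m => ⟨phase (b m x * f (a m)), phase_norm_le _⟩ with hε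
  have hval : φ (Tf, ε) f = ((∑ m ∈ Tf, ‖b m x * f (a m)‖ : ℝ) : 𝕂) := by
    rw [hφ]
    simp only [ContinuousLinearMap.sum_apply, ContinuousLinearMap.smul_apply,
      ContinuousLinearMap.apply_apply, smul_eq_mul]
    rw [RCLike.ofReal_sum]
    apply Finset.sum_congr rfl
    intro m _
    rw [mul_assoc]
    exact phase_mul (b m x * f (a m))
  have h1 : ‖φ (Tf, ε) f‖ ≤ K := by
    calc ‖φ (Tf, ε) f‖ ≤ ‖φ (Tf, ε)‖ * ‖f‖ := (φ (Tf, ε)).le_opNorm f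
      _ ≤ K * 1 := by
          apply mul_le_mul (hK _) hf (norm_nonneg _) ((norm_nonneg _).trans (hK (Tf, ε)))
      _ = K := mul_one K
  rw [hval, RCLike.norm_ofReal, abs_of_nonneg (Finset.sum_nonneg fun m _ => norm_nonneg _)] at h1
  calc ∑ m ∈ Tf, ‖b m x‖ * ‖f (a m)‖ = ∑ m ∈ Tf, ‖b m x * f (a m)‖ := by
        refine Finset.sum_congr rfl fun m _ => (norm_mul _ _).symm
    _ ≤ K := h1
    _ ≤ max K 0 := le_max_left _ _

lemma dualPair_tmul (f : E →L[𝕂] 𝕂) (g : F →L[𝕂] 𝕂) (x : E) (y : F) :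
    dualPair f g (x ⊗ₜ[𝕂] y) = f x * g y := by
  simp [dualPair]

/-- Reindex a sum over a finset of pairs as a sum over an initial segment of `ℕ`. -/
lemma sum_range_equivFin {M γ : Type*} [AddCommMonoid M] (S : Finset γ)
    (v : γ → M) (w : ℕ → M)
    (hw : ∀ (r : ℕ) (h : r < S.card), w r = v (S.equivFin.symm ⟨r, h⟩)) :
    ∑ r ∈ range S.card, w r = ∑ p ∈ S, v p := by
  rw [← Fin.sum_univ_eq_sum_range]
  rw [show (fun i : Fin S.card => w i) = fun i : Fin S.card => v (S.equivFin.symm i) from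
    funext fun i => hw i i.2]
  rw [Equiv.sum_comp S.equivFin.symm (fun p : S => v p)]
  exact Finset.sum_attach S v

/-- Every element of the tensor product is a finite sum of simple tensors indexed by a range. -/
lemma exists_range_rep (u : E ⊗[𝕂] F) :
    ∃ (R : ℕ) (x : ℕ → E) (y : ℕ → F), u = ∑ r ∈ range R, x r ⊗ₜ[𝕂] y r := by
  classical
  obtain ⟨S, hS⟩ := TensorProduct.exists_finset u
  refine ⟨S.card,
    fun r => if h : r < S.card then (S.equivFin.symm ⟨r, h⟩ : E × F).1 else 0,
    fun r => if h : r < S.card then (S.equivFin.symm ⟨r, h⟩ : E × F).2 else 0, ?_⟩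
  rw [hS]
  refine (sum_range_equivFin S (fun p => p.1 ⊗ₜ[𝕂] p.2) _ fun r h => ?_).symm
  simp [h]

end AuxiliaryLemmas

set_option maxHeartbeats 1600000 in
lemma alphaBess_tensor_basis_besselian_aux [CompleteSpace E] [CompleteSpace F]
    (a : ℕ → E) (b : ℕ → E →L[𝕂] 𝕂) (c : ℕ → F) (d : ℕ → F →L[𝕂] 𝕂)
    (hF : IsUnconditionalSchauderBasis a b) (hG : IsUnconditionalSchauderBasis c d)
    (A : E ⊗[𝕂] F →ₗ[𝕂] 𝕂) (C : ℝ)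
    (hA : ∀ v : E ⊗[𝕂] F, ‖A v‖ ≤ C * alphaBess a b c d v)
    (u : E ⊗[𝕂] F) :
    Summable (fun mn : ℕ × ℕ => ‖dualPair (b mn.1) (d mn.2) u‖ * ‖A (a mn.1 ⊗ₜ[𝕂] c mn.2)‖) ∧
    ∑' mn : ℕ × ℕ, ‖dualPair (b mn.1) (d mn.2) u‖ * ‖A (a mn.1 ⊗ₜ[𝕂] c mn.2)‖ ≤
      C * alphaBess a b c d u := by
  classical
  set z : ℕ × ℕ → 𝕂 := fun mn => dualPair (b mn.1) (d mn.2) u with hz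
  set w : ℕ × ℕ → 𝕂 := fun mn => A (a mn.1 ⊗ₜ[𝕂] c mn.2) with hwdef
  have hterm_nonneg : ∀ p : ℕ × ℕ, 0 ≤ ‖z p‖ * ‖w p‖ := fun p =>
    mul_nonneg (norm_nonneg _) (norm_nonneg _)
  have hbR_nonneg : ∀ (R : ℕ) (x : ℕ → E) (y : ℕ → F), (0 : ℝ) ≤ bessRep a b c d R x y := by
    intro R x y
    apply Real.iSup_nonneg
    intro fg
    apply Finset.sum_nonneg
    intro r _
    apply tsum_nonneg
    intro mn
    positivity
  have halpha_nonneg : ∀ v : E ⊗[𝕂] F, 0 ≤ alphaBess a b c d v := by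
    intro v
    apply Real.sInf_nonneg
    rintro t ⟨R, x, y, -, rfl⟩
    exact hbR_nonneg R x y
  have hbddb : ∀ v : E ⊗[𝕂] F, BddBelow {t : ℝ | ∃ (R : ℕ) (x : ℕ → E) (y : ℕ → F),
      v = ∑ r ∈ Finset.range R, x r ⊗ₜ[𝕂] y r ∧ t = bessRep a b c d R x y} := by
    intro v
    refine ⟨0, ?_⟩
    rintro t ⟨R, x, y, -, rfl⟩
    exact hbR_nonneg R x y
  have hne : ∀ v : E ⊗[𝕂] F, Set.Nonempty {t : ℝ | ∃ (R : ℕ) (x : ℕ → E) (y : ℕ → F),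
      v = ∑ r ∈ Finset.range R, x r ⊗ₜ[𝕂] y r ∧ t = bessRep a b c d R x y} := by
    intro v
    obtain ⟨R, x, y, hxy⟩ := exists_range_rep v
    exact ⟨bessRep a b c d R x y, ⟨R, x, y, hxy, rfl⟩⟩
  have key : ∀ S : Finset (ℕ × ℕ), ∑ p ∈ S, ‖z p‖ * ‖w p‖ ≤ C * alphaBess a b c d u := by
    intro S
    rcases lt_or_ge C 0 with hC | hC
    · -- degenerate case: everything vanishes
      have hAzero : ∀ v : E ⊗[𝕂] F, A v = 0 := by
        intro v
        have h1 := hA v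
        have h2 : C * alphaBess a b c d v ≤ 0 :=
          mul_nonpos_of_nonpos_of_nonneg hC.le (halpha_nonneg v)
        exact norm_le_zero_iff.1 (h1.trans h2)
      have halpha0 : 0 ≤ C * alphaBess a b c d u := le_trans (norm_nonneg _) (hA u)
      have hsum0 : ∑ p ∈ S, ‖z p‖ * ‖w p‖ = 0 := by
        apply Finset.sum_eq_zero
        intro p _
        have : w p = 0 := hAzero _
        rw [this]
        simp
      rw [hsum0]
      exact halpha0
    · -- main case
      set ε : ℕ × ℕ → 𝕂 := fun p => phase (z p * w p) with hε
      set v : E ⊗[𝕂] F := ∑ p ∈ S, ((ε p * z p) • a p.1) ⊗ₜ[𝕂] c p.2 with hv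
      have hAv : A v = ((∑ p ∈ S, ‖z p‖ * ‖w p‖ : ℝ) : 𝕂) := by
        rw [hv, map_sum, RCLike.ofReal_sum]
        refine Finset.sum_congr rfl fun p _ => ?_
        rw [← smul_tmul', map_smul, smul_eq_mul]
        have hwp : A (a p.1 ⊗ₜ[𝕂] c p.2) = w p := rfl
        have hεp : ε p = phase (z p * w p) := rfl
        rw [hwp, hεp, mul_assoc, phase_mul, norm_mul]
      have hAvn : ‖A v‖ = ∑ p ∈ S, ‖z p‖ * ‖w p‖ := by
        rw [hAv, RCLike.norm_ofReal]
        exact abs_of_nonneg (Finset.sum_nonneg fun p _ => hterm_nonneg p)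
      -- a representation of `v` indexed by a range
      set x1 : ℕ → E := fun r => if h : r < S.card then
          (ε (S.equivFin.symm ⟨r, h⟩) * z (S.equivFin.symm ⟨r, h⟩)) •
            a (S.equivFin.symm ⟨r, h⟩ : ℕ × ℕ).1 else 0 with hx1
      set y1 : ℕ → F := fun r => if h : r < S.card then
          c (S.equivFin.symm ⟨r, h⟩ : ℕ × ℕ).2 else 0 with hy1
      have hvrep : v = ∑ r ∈ Finset.range S.card, x1 r ⊗ₜ[𝕂] y1 r := by
        rw [hv]
        refine (sum_range_equivFin S (fun p => ((ε p * z p) • a p.1) ⊗ₜ[𝕂] c p.2) _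
          fun r h => ?_).symm
        simp only [hx1, hy1, dif_pos h]
      -- the `bessRep` of this representation is dominated by that of any rep of `u`
      have hmaj : ∀ t ∈ {t : ℝ | ∃ (R : ℕ) (x : ℕ → E) (y : ℕ → F),
          u = ∑ r ∈ Finset.range R, x r ⊗ₜ[𝕂] y r ∧ t = bessRep a b c d R x y},
          bessRep a b c d S.card x1 y1 ≤ t := by
        rintro t ⟨R₀, x₀, y₀, hu, rfl⟩
        haveI hnonemp : Nonempty ({f : E →L[𝕂] 𝕂 // ‖f‖ ≤ 1} × {g : F →L[𝕂] 𝕂 // ‖g‖ ≤ 1}) :=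
          ⟨⟨⟨0, by simp⟩, ⟨0, by simp⟩⟩⟩
        choose K1 hK1 hK1' using fun r => usb_bound hF (x₀ r)
        choose K2 hK2 hK2' using fun r => usb_bound hG (y₀ r)
        -- summability of the double series for fixed functionals
        have hsummand : ∀ (r : ℕ) (f : E →L[𝕂] 𝕂) (g : F →L[𝕂] 𝕂),
            Summable (fun mn : ℕ × ℕ =>
              ‖b mn.1 (x₀ r)‖ * ‖d mn.2 (y₀ r)‖ * ‖f (a mn.1)‖ * ‖g (c mn.2)‖) := by
          intro r f g
          have hprod : Summable (fun mn : ℕ × ℕ =>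
              (‖b mn.1 (x₀ r)‖ * ‖f (a mn.1)‖) * (‖d mn.2 (y₀ r)‖ * ‖g (c mn.2)‖)) :=
            (usb_summable hF (x₀ r) f).mul_of_nonneg (usb_summable hG (y₀ r) g)
              (fun m => by positivity) (fun n => by positivity)
          exact hprod.congr fun mn => by ring
        -- uniform bound on the inner expression of the u-representation
        have hinner_u : ∀ (f : E →L[𝕂] 𝕂) (g : F →L[𝕂] 𝕂), ‖f‖ ≤ 1 → ‖g‖ ≤ 1 →
            ∑ r ∈ Finset.range R₀, ∑' mn : ℕ × ℕ,
              ‖b mn.1 (x₀ r)‖ * ‖d mn.2 (y₀ r)‖ * ‖f (a mn.1)‖ * ‖g (c mn.2)‖ ≤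
            ∑ r ∈ Finset.range R₀, K1 r * K2 r := by
          intro f g hf hg
          apply Finset.sum_le_sum
          intro r _
          have hprod : Summable (fun mn : ℕ × ℕ =>
              (‖b mn.1 (x₀ r)‖ * ‖f (a mn.1)‖) * (‖d mn.2 (y₀ r)‖ * ‖g (c mn.2)‖)) :=
            (usb_summable hF (x₀ r) f).mul_of_nonneg (usb_summable hG (y₀ r) g)
              (fun m => by positivity) (fun n => by positivity)
          have heqf : (fun mn : ℕ × ℕ =>
              ‖b mn.1 (x₀ r)‖ * ‖d mn.2 (y₀ r)‖ * ‖f (a mn.1)‖ * ‖g (c mn.2)‖) =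
              fun mn : ℕ × ℕ =>
              (‖b mn.1 (x₀ r)‖ * ‖f (a mn.1)‖) * (‖d mn.2 (y₀ r)‖ * ‖g (c mn.2)‖) :=
            funext fun mn => by ring
          rw [heqf, Summable.tsum_prod hprod]
          have hstep : ∀ m : ℕ, ∑' n : ℕ,
              (‖b m (x₀ r)‖ * ‖f (a m)‖) * (‖d n (y₀ r)‖ * ‖g (c n)‖) =
              (‖b m (x₀ r)‖ * ‖f (a m)‖) * ∑' n : ℕ, ‖d n (y₀ r)‖ * ‖g (c n)‖ :=
            fun m => tsum_mul_left
          calc ∑' m : ℕ, ∑' n : ℕ, (‖b m (x₀ r)‖ * ‖f (a m)‖) * (‖d n (y₀ r)‖ * ‖g (c n)‖)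
              = ∑' m : ℕ, (‖b m (x₀ r)‖ * ‖f (a m)‖) * ∑' n : ℕ, ‖d n (y₀ r)‖ * ‖g (c n)‖ :=
                tsum_congr hstep
            _ = (∑' m : ℕ, ‖b m (x₀ r)‖ * ‖f (a m)‖) * ∑' n : ℕ, ‖d n (y₀ r)‖ * ‖g (c n)‖ :=
                tsum_mul_right
            _ ≤ K1 r * K2 r := by
                apply mul_le_mul (hK1' r f hf) (hK2' r g hg)
                  (tsum_nonneg fun n => by positivity) (hK1 r)
        -- now compare the two `bessRep`s
        unfold bessRep
        apply ciSup_le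
        rintro ⟨⟨f, hf⟩, ⟨g, hg⟩⟩
        have hbdd : BddAbove (Set.range fun
            fg : {f : E →L[𝕂] 𝕂 // ‖f‖ ≤ 1} × {g : F →L[𝕂] 𝕂 // ‖g‖ ≤ 1} =>
            ∑ r ∈ Finset.range R₀, ∑' mn : ℕ × ℕ,
              ‖b mn.1 (x₀ r)‖ * ‖d mn.2 (y₀ r)‖ * ‖fg.1.1 (a mn.1)‖ * ‖fg.2.1 (c mn.2)‖) := by
          refine ⟨∑ r ∈ Finset.range R₀, K1 r * K2 r, ?_⟩
          rintro val ⟨⟨⟨f', hf'⟩, ⟨g', hg'⟩⟩, rfl⟩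
          exact hinner_u f' g' hf' hg'
        refine le_trans ?_ (le_ciSup hbdd (⟨⟨f, hf⟩, ⟨g, hg⟩⟩ :
          {f : E →L[𝕂] 𝕂 // ‖f‖ ≤ 1} × {g : F →L[𝕂] 𝕂 // ‖g‖ ≤ 1}))
        -- remains: inner_v ≤ inner_u for this fixed (f, g)
        simp only
        -- rewrite the sum over the range as a sum over S
        have hconv : ∑ r ∈ Finset.range S.card, ∑' mn : ℕ × ℕ,
            ‖b mn.1 (x1 r)‖ * ‖d mn.2 (y1 r)‖ * ‖f (a mn.1)‖ * ‖g (c mn.2)‖ =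
            ∑ p ∈ S, ∑' mn : ℕ × ℕ,
            ‖b mn.1 ((ε p * z p) • a p.1)‖ * ‖d mn.2 (c p.2)‖ * ‖f (a mn.1)‖ * ‖g (c mn.2)‖ := by
          apply sum_range_equivFin S (fun p => ∑' mn : ℕ × ℕ,
            ‖b mn.1 ((ε p * z p) • a p.1)‖ * ‖d mn.2 (c p.2)‖ * ‖f (a mn.1)‖ * ‖g (c mn.2)‖)
          intro r h
          simp only [hx1, hy1, dif_pos h]
        rw [hconv]
        -- collapse each tsum using biorthogonality
        have hcollapse : ∀ p : ℕ × ℕ, ∑' mn : ℕ × ℕ,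
            ‖b mn.1 ((ε p * z p) • a p.1)‖ * ‖d mn.2 (c p.2)‖ * ‖f (a mn.1)‖ * ‖g (c mn.2)‖ =
            ‖ε p * z p‖ * ‖f (a p.1)‖ * ‖g (c p.2)‖ := by
          intro p
          rw [tsum_eq_single p]
          · rw [map_smul, smul_eq_mul, hF.1 p.1 p.1, hG.1 p.2 p.2]
            simp
          · intro mn hmn
            by_cases h1 : mn.1 = p.1
            · have h2 : mn.2 ≠ p.2 := fun h2 => hmn (Prod.ext h1 h2)
              rw [hG.1 mn.2 p.2, if_neg h2]
              simp
            · rw [map_smul, smul_eq_mul, hF.1 mn.1 p.1, if_neg h1]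
              simp
        calc ∑ p ∈ S, ∑' mn : ℕ × ℕ,
            ‖b mn.1 ((ε p * z p) • a p.1)‖ * ‖d mn.2 (c p.2)‖ * ‖f (a mn.1)‖ * ‖g (c mn.2)‖
            = ∑ p ∈ S, ‖ε p * z p‖ * ‖f (a p.1)‖ * ‖g (c p.2)‖ :=
              Finset.sum_congr rfl fun p _ => hcollapse p
          _ ≤ ∑ p ∈ S, ∑ r ∈ Finset.range R₀,
              ‖b p.1 (x₀ r)‖ * ‖d p.2 (y₀ r)‖ * ‖f (a p.1)‖ * ‖g (c p.2)‖ := by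
              apply Finset.sum_le_sum
              intro p _
              have hz_le : ‖ε p * z p‖ ≤ ∑ r ∈ Finset.range R₀,
                  ‖b p.1 (x₀ r)‖ * ‖d p.2 (y₀ r)‖ := by
                calc ‖ε p * z p‖ ≤ ‖z p‖ := by
                      rw [norm_mul]
                      exact mul_le_of_le_one_left (norm_nonneg _) (phase_norm_le _)
                  _ = ‖dualPair (b p.1) (d p.2) u‖ := rfl
                  _ ≤ ∑ r ∈ Finset.range R₀, ‖b p.1 (x₀ r)‖ * ‖d p.2 (y₀ r)‖ := by
                      rw [hu, map_sum]
                      refine le_trans (norm_sum_le _ _) (le_of_eq ?_)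
                      refine Finset.sum_congr rfl fun r _ => ?_
                      rw [dualPair_tmul, norm_mul]
              calc ‖ε p * z p‖ * ‖f (a p.1)‖ * ‖g (c p.2)‖
                  ≤ (∑ r ∈ Finset.range R₀, ‖b p.1 (x₀ r)‖ * ‖d p.2 (y₀ r)‖) *
                    ‖f (a p.1)‖ * ‖g (c p.2)‖ := by
                    apply mul_le_mul_of_nonneg_right _ (norm_nonneg _)
                    exact mul_le_mul_of_nonneg_right hz_le (norm_nonneg _)
                _ = ∑ r ∈ Finset.range R₀,
                    ‖b p.1 (x₀ r)‖ * ‖d p.2 (y₀ r)‖ * ‖f (a p.1)‖ * ‖g (c p.2)‖ := by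
                    rw [Finset.sum_mul, Finset.sum_mul]
          _ = ∑ r ∈ Finset.range R₀, ∑ p ∈ S,
              ‖b p.1 (x₀ r)‖ * ‖d p.2 (y₀ r)‖ * ‖f (a p.1)‖ * ‖g (c p.2)‖ :=
              Finset.sum_comm
          _ ≤ ∑ r ∈ Finset.range R₀, ∑' mn : ℕ × ℕ,
              ‖b mn.1 (x₀ r)‖ * ‖d mn.2 (y₀ r)‖ * ‖f (a mn.1)‖ * ‖g (c mn.2)‖ := by
              apply Finset.sum_le_sum
              intro r _
              exact Summable.sum_le_tsum S (fun mn _ => by positivity) (hsummand r f g)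
      -- conclude `alphaBess v ≤ alphaBess u`
      have hle : alphaBess a b c d v ≤ alphaBess a b c d u := by
        have h1 : alphaBess a b c d v ≤ bessRep a b c d S.card x1 y1 :=
          csInf_le (hbddb v) ⟨S.card, x1, y1, hvrep, rfl⟩
        have h2 : bessRep a b c d S.card x1 y1 ≤ alphaBess a b c d u :=
          le_csInf (hne u) hmaj
        exact h1.trans h2
      calc ∑ p ∈ S, ‖z p‖ * ‖w p‖ = ‖A v‖ := hAvn.symm
        _ ≤ C * alphaBess a b c d v := hA v
        _ ≤ C * alphaBess a b c d u := mul_le_mul_of_nonneg_left hle hC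
  have hsummable : Summable fun p : ℕ × ℕ => ‖z p‖ * ‖w p‖ :=
    summable_of_sum_le hterm_nonneg key
  exact ⟨hsummable, Summable.tsum_le_of_sum_le hsummable key⟩

/-- For Banach spaces `E, F` with unconditional Schauder bases
`𝓕 = ((a_m, b_m*))`, `𝓖 = ((x_n, y_n*))`, every linear functional `A*` on `E ⊗ F`
bounded with respect to `α^Bess_{𝓕,𝓖}` (with bound `C`, in particular for the
operator norm of `A*`) satisfies the Besselian inequality
`∑_{m,n} |(b_m* ⊗ y_n*)(u)| |A*(a_m ⊗ x_n)| ≤ C · α^Bess_{𝓕,𝓖}(u)`: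
the tensor product sequence `((a_m ⊗ x_n, b_m* ⊗ y_n*))` in the square ordering is a
Besselian — hence unconditional — Schauder basis of `E ⊗_{α^Bess} F`. -/
theorem alphaBess_tensor_basis_besselian [CompleteSpace E] [CompleteSpace F]
    (a : ℕ → E) (b : ℕ → E →L[𝕂] 𝕂) (c : ℕ → F) (d : ℕ → F →L[𝕂] 𝕂)
    (hF : IsUnconditionalSchauderBasis a b) (hG : IsUnconditionalSchauderBasis c d)
    (A : E ⊗[𝕂] F →ₗ[𝕂] 𝕂) (C : ℝ)
    (hA : ∀ v : E ⊗[𝕂] F, ‖A v‖ ≤ C * alphaBess a b c d v)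
    (u : E ⊗[𝕂] F) :
    Summable (fun mn : ℕ × ℕ => ‖dualPair (b mn.1) (d mn.2) u‖ * ‖A (a mn.1 ⊗ₜ[𝕂] c mn.2)‖) ∧
    ∑' mn : ℕ × ℕ, ‖dualPair (b mn.1) (d mn.2) u‖ * ‖A (a mn.1 ⊗ₜ[𝕂] c mn.2)‖ ≤
      C * alphaBess a b c d u :=
  alphaBess_tensor_basis_besselian_aux a b c d hF hG A C hA u
end
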